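/- Let R be an NI ring which is weak Σ-rigid with respect to a finite family Σ = {σ₁,…,σₙ} of ring endomorphisms of R. If a, b ∈ R satisfy a·σ^α(b) ∈ nil(R) for some α ∈ ℕⁿ, then ab ∈ nil(R) and ba ∈ nil(R). -/
import Mathlib


/-- For `θ ∈ ℕⁿ`, `sigmaPow σ θ = σ₁^{θ₁} ∘ σ₂^{θ₂} ∘ ⋯ ∘ σₙ^{θₙ}` (so `σₙ` is applied first). -/
def sigmaPow {R : Type*} [Ring R] {n : ℕ} (σ : Fin n → R →+* R) (θ : Fin n → ℕ) : R → R :=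
  fun r => Fin.foldr n (fun i x => (σ i)^[θ i] x) r

lemma sigmaPow_mul {R : Type*} [Ring R] {n : ℕ} (σ : Fin n → R →+* R) (θ : Fin n → ℕ)
    (x y : R) : sigmaPow σ θ (x * y) = sigmaPow σ θ x * sigmaPow σ θ y := by
  induction n with
  | zero => simp [sigmaPow]
  | succ m ih =>
      simp only [sigmaPow, Fin.foldr_succ] at *
      rw [ih (fun i => σ i.succ) (fun i => θ i.succ)]
      exact iterate_map_mul _ _ _ _

lemma mul_pow_succ_aux {R : Type*} [Ring R] (a b : R) (k : ℕ) :
    (a * b) ^ (k + 1) = a * (b * a) ^ k * b := by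
  induction k with
  | zero => simp
  | succ m ih =>
      rw [pow_succ, ih, pow_succ]
      noncomm_ring

lemma isNilpotent_mul_comm {R : Type*} [Ring R] {a b : R} (h : IsNilpotent (a * b)) :
    IsNilpotent (b * a) := by
  obtain ⟨k, hk⟩ := h
  exact ⟨k + 1, by rw [mul_pow_succ_aux, hk, mul_zero, zero_mul]⟩

/-- If `R` is an NI ring (its nilpotent elements form a two-sided ideal) which is weak
`Σ`-rigid, and `a·σ^α(b) ∈ nil(R)` for some `α ∈ ℕⁿ`, then `ab ∈ nil(R)` and `ba ∈ nil(R)`. -/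
theorem stmt_5 {R : Type*} [Ring R] {n : ℕ} (σ : Fin n → R →+* R)
    (I : TwoSidedIdeal R) (hNI : ∀ x : R, x ∈ I ↔ IsNilpotent x)
    (hweak : ∀ (a : R) (θ : Fin n → ℕ), IsNilpotent (a * sigmaPow σ θ a) ↔ IsNilpotent a)
    (a b : R) (α : Fin n → ℕ) (h : IsNilpotent (a * sigmaPow σ α b)) :
    IsNilpotent (a * b) ∧ IsNilpotent (b * a) := by
  have hI : a * sigmaPow σ α b ∈ I := (hNI _).mpr h
  have h2 : b * (a * sigmaPow σ α b) * sigmaPow σ α a ∈ I :=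
    I.mul_mem_right _ _ (I.mul_mem_left _ _ hI)
  have h3 : IsNilpotent ((b * a) * sigmaPow σ α (b * a)) := by
    rw [sigmaPow_mul]
    have : (b * a) * (sigmaPow σ α b * sigmaPow σ α a)
        = b * (a * sigmaPow σ α b) * sigmaPow σ α a := by noncomm_ring
    rw [this]
    exact (hNI _).mp h2
  have hba : IsNilpotent (b * a) := (hweak _ _).mp h3
  exact ⟨isNilpotent_mul_comm hba, hba⟩
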